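/- Let G be a 3-connected planar graph with exactly k 3-cuts, k ≥ 1, and let {u,v,w} be a 3-cut in G. Then the total number of 3-cuts in the two edge closed components of G - {u,v,w} is at most k - 1. -/

import Mathlib

open SimpleGraph Set

/-- A plane embedding of a simple graph: vertices are mapped to points of the plane,
edges to injective arcs, such that arcs meet only in common endpoints. -/
structure PlaneEmbedding {V : Type*} (G : SimpleGraph V) where
  vertexMap : V → ℝ × ℝ
  vertex_inj : Function.Injective vertexMap
  edgeMap : ∀ ⦃a b : V⦄, G.Adj a b → C(unitInterval, ℝ × ℝ)
  edge_start : ∀ ⦃a b : V⦄ (h : G.Adj a b), edgeMap h 0 = vertexMap a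
  edge_end : ∀ ⦃a b : V⦄ (h : G.Adj a b), edgeMap h 1 = vertexMap b
  edge_inj : ∀ ⦃a b : V⦄ (h : G.Adj a b), Function.Injective (edgeMap h)
  edge_symm : ∀ ⦃a b : V⦄ (h : G.Adj a b),
    Set.range (edgeMap h) = Set.range (edgeMap h.symm)
  edge_int : ∀ ⦃a b c d : V⦄ (h : G.Adj a b) (h' : G.Adj c d),
    s(a, b) ≠ s(c, d) →
    Set.range (edgeMap h) ∩ Set.range (edgeMap h') ⊆
      vertexMap '' (({a, b} : Set V) ∩ {c, d})
  edge_no_vertex : ∀ ⦃a b : V⦄ (h : G.Adj a b) (x : V),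
    vertexMap x ∈ Set.range (edgeMap h) → x = a ∨ x = b

variable {V : Type*}

/-- The subset of the plane covered by the drawing of the graph. -/
def PlaneEmbedding.drawing {G : SimpleGraph V} (E : PlaneEmbedding G) : Set (ℝ × ℝ) :=
  Set.range E.vertexMap ∪ ⋃ (a : V) (b : V) (h : G.Adj a b), Set.range (E.edgeMap h)

/-- A face of a plane embedding: a connected component of the complement of the drawing. -/
def PlaneEmbedding.IsFace {G : SimpleGraph V} (E : PlaneEmbedding G)
    (F : Set (ℝ × ℝ)) : Prop :=
  ∃ x ∈ E.drawingᶜ, F = connectedComponentIn E.drawingᶜ x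

/-- A face whose boundary is the union of the arcs of three mutually adjacent vertices. -/
def PlaneEmbedding.FaceIsTriangleOn {G : SimpleGraph V} (E : PlaneEmbedding G)
    (F : Set (ℝ × ℝ)) (a b c : V) : Prop :=
  ∃ (h1 : G.Adj a b) (h2 : G.Adj b c) (h3 : G.Adj c a),
    frontier F = Set.range (E.edgeMap h1) ∪ Set.range (E.edgeMap h2) ∪
      Set.range (E.edgeMap h3)

/-- A face of a plane embedding is a triangle if it is bounded by three arcs of a 3-cycle. -/
def PlaneEmbedding.FaceIsTriangle {G : SimpleGraph V} (E : PlaneEmbedding G)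
    (F : Set (ℝ × ℝ)) : Prop :=
  ∃ a b c : V, E.FaceIsTriangleOn F a b c

/-- `(a,b,c)` is a facial triangle of the embedding `E`. -/
def PlaneEmbedding.IsFacialTriangle {G : SimpleGraph V} (E : PlaneEmbedding G)
    (a b c : V) : Prop :=
  ∃ F : Set (ℝ × ℝ), E.IsFace F ∧ E.FaceIsTriangleOn F a b c

/-- A graph is planar if it admits a plane embedding. -/
def IsPlanar (G : SimpleGraph V) : Prop := Nonempty (PlaneEmbedding G)

/-- A graph is `k`-connected if it has more than `k` vertices and removing fewer than
`k` vertices always leaves a connected graph. -/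
def IsKConnected (k : ℕ) (G : SimpleGraph V) : Prop :=
  k < Nat.card V ∧ ∀ S : Set V, S.Finite → S.ncard < k → (G.induce Sᶜ).Connected

/-- A 3-cut: a set of 3 vertices whose removal disconnects the graph. -/
def IsThreeCut (G : SimpleGraph V) (S : Set V) : Prop :=
  S.ncard = 3 ∧ ¬ (G.induce Sᶜ).Preconnected

/-- `C` is (the vertex set of) a connected component of `G - S`. -/
def IsCompOf (G : SimpleGraph V) (S : Set V) (C : Set V) : Prop :=
  C.Nonempty ∧ C ⊆ Sᶜ ∧ (G.induce C).Connected ∧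
    ∀ a ∈ C, ∀ b ∈ Sᶜ, G.Adj a b → b ∈ C

/-- The edge closed component of `G - {u,v,w}` corresponding to the component `C`:
the graph induced on `C ∪ {u,v,w}` with the edges `uv`, `vw`, `wu` added. -/
def edgeClosedGraph (G : SimpleGraph V) (u v w : V) (C : Set V) :
    SimpleGraph ↥(C ∪ {u, v, w}) :=
  SimpleGraph.fromRel (fun a b =>
    G.Adj a b ∨ ((a : V) ∈ ({u, v, w} : Set V) ∧ (b : V) ∈ ({u, v, w} : Set V)))

/-!
A 3-cut `S` of an edge closed component `G_C` cannot be `{u, v, w}` itself, because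
`G_C - {u, v, w}` is the connected graph `G[C]`. So `S` misses some `t ∈ {u, v, w}`, and since
the vertices of the triangle outside `S` are all joined to `t`, a component of `G_C - S` avoiding
`t` lies inside `C`, where `G_C` has the edges of `G` and no edges leave towards the rest of `G`.
It is therefore cut off from `t` in `G - S` too: `S` is a 3-cut of `G` other than `{u, v, w}`.
Cuts coming from the two sides are distinct, as they would otherwise lie in `{u, v, w}`.
-/

namespace SimpleGraph

theorem Reachable.of_adj_closed {W : Type*} {H : SimpleGraph W} {p : W → Prop}
    (hp : ∀ a b, p a → H.Adj a b → p b) {x y : W} (hxy : H.Reachable x y) (hx : p x) :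
    p y := by
  obtain ⟨q⟩ := hxy
  by_contra hy
  obtain ⟨d, -, hd, hd'⟩ := q.exists_boundary_dart {z | p z} hx hy
  exact hd' (hp _ _ hd d.adj)

end SimpleGraph

section Components

variable {G : SimpleGraph V} {T C C' : Set V}

theorem IsCompOf.subset_of_mem (hC : IsCompOf G T C) (hC' : IsCompOf G T C') {x : V}
    (hx : x ∈ C) (hx' : x ∈ C') : C ⊆ C' := fun a ha =>
  (hC.2.2.1.preconnected ⟨x, hx⟩ ⟨a, ha⟩).of_adj_closed (p := fun z : C => (z : V) ∈ C')
    (fun z z' hz hzz' => hC'.2.2.2 z hz z' (hC.2.1 z'.2) hzz') hx'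

theorem IsCompOf.disjoint (hC : IsCompOf G T C) (hC' : IsCompOf G T C') (hne : C ≠ C') :
    Disjoint C C' :=
  Set.disjoint_left.2 fun _ hx hx' =>
    hne ((hC.subset_of_mem hC' hx hx').antisymm (hC'.subset_of_mem hC hx' hx))

end Components

section EdgeClosed

variable {G : SimpleGraph V} {u v w : V} {C : Set V}

theorem edgeClosedGraph_adj_of_adj {a b : ↥(C ∪ {u, v, w})} (h : G.Adj a b) :
    (edgeClosedGraph G u v w C).Adj a b :=
  (fromRel_adj _ _ _).2 ⟨fun hab => h.ne (congrArg Subtype.val hab), Or.inl (Or.inl h)⟩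

theorem edgeClosedGraph_adj_of_mem {a b : ↥(C ∪ {u, v, w})} (hab : a ≠ b)
    (ha : (a : V) ∈ ({u, v, w} : Set V)) (hb : (b : V) ∈ ({u, v, w} : Set V)) :
    (edgeClosedGraph G u v w C).Adj a b :=
  (fromRel_adj _ _ _).2 ⟨hab, Or.inl (Or.inr ⟨ha, hb⟩)⟩

theorem IsCompOf.connected_edgeClosedGraph_induce (hC : IsCompOf G {u, v, w} C) :
    ((edgeClosedGraph G u v w C).induce (Subtype.val ⁻¹' {u, v, w})ᶜ).Connected := by
  let f : G.induce C →g (edgeClosedGraph G u v w C).induce (Subtype.val ⁻¹' {u, v, w})ᶜ :=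
    { toFun := fun c => ⟨⟨c, Or.inl c.2⟩, hC.2.1 c.2⟩
      map_rel' := fun h => edgeClosedGraph_adj_of_adj h }
  exact hC.2.2.1.map f fun z => ⟨⟨z, z.1.2.resolve_right z.2⟩, rfl⟩

theorem IsCompOf.not_preconnected_induce_image (hC : IsCompOf G {u, v, w} C)
    {S : Set ↥(C ∪ {u, v, w})} (hS : ¬ ((edgeClosedGraph G u v w C).induce Sᶜ).Preconnected)
    {t : V} (htT : t ∈ ({u, v, w} : Set V)) (htS : t ∉ Subtype.val '' S) :
    ¬ (G.induce (Subtype.val '' S)ᶜ).Preconnected := by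
  set H := (edgeClosedGraph G u v w C).induce Sᶜ
  let t' : ↥Sᶜ := ⟨⟨t, Or.inr htT⟩, fun h => htS ⟨_, h, rfl⟩⟩
  obtain ⟨z, hzt⟩ : ∃ z, ¬ H.Reachable z t' := by
    by_contra! h
    exact hS fun x y => (h x).trans (h y).symm
  have hmemC : ∀ a, H.Reachable z a → ((a : ↥(C ∪ {u, v, w})) : V) ∈ C := by
    intro a hza
    refine a.1.2.resolve_right fun haT => hzt (hza.trans ?_)
    by_cases hat : a = t'
    · rw [hat]
    · exact Adj.reachable (G := H)
        (edgeClosedGraph_adj_of_mem (fun h => hat (Subtype.ext h)) haT htT)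
  intro hpre
  let p : ↥(Subtype.val '' S)ᶜ → Prop := fun a =>
    ∃ b, H.Reachable z b ∧ ((b : ↥(C ∪ {u, v, w})) : V) = a
  have hstep : ∀ a c, p a → (G.induce (Subtype.val '' S)ᶜ).Adj a c → p c := by
    rintro ⟨_, -⟩ c ⟨b, hzb, rfl⟩ (hbc : G.Adj b c)
    have hcCT : (c : V) ∈ C ∪ {u, v, w} := by
      by_cases hcT : (c : V) ∈ ({u, v, w} : Set V)
      · exact Or.inr hcT
      · exact Or.inl (hC.2.2.2 _ (hmemC b hzb) _ hcT hbc)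
    exact ⟨⟨⟨c, hcCT⟩, fun h => c.2 ⟨_, h, rfl⟩⟩,
      hzb.trans (Adj.reachable (G := H) (edgeClosedGraph_adj_of_adj hbc)), rfl⟩
  obtain ⟨b, hzb, hbt⟩ := (hpre ⟨z, fun ⟨_, h, hz⟩ => z.2 (Subtype.ext hz ▸ h)⟩
    ⟨t, htS⟩).of_adj_closed hstep ⟨z, .rfl, rfl⟩
  exact hzt (by rwa [show b = t' from Subtype.ext (Subtype.ext hbt)] at hzb)

theorem IsCompOf.isThreeCut_image (hT : ({u, v, w} : Set V).ncard = 3)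
    (hC : IsCompOf G {u, v, w} C) {S : Set ↥(C ∪ {u, v, w})}
    (hS : IsThreeCut (edgeClosedGraph G u v w C) S) :
    IsThreeCut G (Subtype.val '' S) ∧ Subtype.val '' S ≠ {u, v, w} := by
  have hcard : (Subtype.val '' S).ncard = 3 :=
    (Set.ncard_image_of_injective S Subtype.val_injective).trans hS.1
  have hnsub : ¬ {u, v, w} ⊆ Subtype.val '' S := by
    intro hsub
    have hST : Subtype.val '' S = {u, v, w} := (Set.eq_of_subset_of_ncard_le hsub
      (by rw [hcard, hT]) (Set.finite_of_ncard_ne_zero (by omega))).symm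
    have : S = Subtype.val ⁻¹' {u, v, w} :=
      (Set.preimage_image_eq S Subtype.val_injective).symm.trans (congrArg _ hST)
    exact hS.2 (this ▸ hC.connected_edgeClosedGraph_induce.preconnected)
  obtain ⟨t, htT, htS⟩ := Set.not_subset.1 hnsub
  exact ⟨⟨hcard, hC.not_preconnected_induce_image hS.2 htT htS⟩,
    fun h => htS (h.symm.subset htT)⟩

theorem IsCompOf.disjoint_image_threeCuts (hT : ({u, v, w} : Set V).ncard = 3)
    {C₁ C₂ : Set V} (h1 : IsCompOf G {u, v, w} C₁) (h2 : IsCompOf G {u, v, w} C₂)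
    (hne : C₁ ≠ C₂) :
    Disjoint (Set.image Subtype.val '' {S | IsThreeCut (edgeClosedGraph G u v w C₁) S})
      (Set.image Subtype.val '' {S | IsThreeCut (edgeClosedGraph G u v w C₂) S}) := by
  rw [Set.disjoint_left]
  rintro _ ⟨S₁, hS₁, rfl⟩ ⟨S₂, -, hS⟩
  have hsub : Subtype.val '' S₁ ⊆ {u, v, w} := by
    intro x hx
    rcases Subtype.coe_image_subset _ S₁ hx with hx₁ | hxT
    · rcases Subtype.coe_image_subset _ S₂ (hS ▸ hx) with hx₂ | hxT
      · exact absurd hx₂ (Set.disjoint_left.1 (h1.disjoint h2 hne) hx₁)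
      · exact hxT
    · exact hxT
  obtain ⟨⟨hcard, -⟩, hne'⟩ := h1.isThreeCut_image hT hS₁
  exact hne' (Set.eq_of_subset_of_ncard_le hsub (by rw [hT, hcard]) (Set.toFinite _))

end EdgeClosed

theorem stmt7_general [Fintype V] (G : SimpleGraph V)
    (k : ℕ) (hcuts : {S : Set V | IsThreeCut G S}.ncard = k)
    (u v w : V) (hcut : IsThreeCut G {u, v, w})
    (C₁ C₂ : Set V) (h1 : IsCompOf G {u, v, w} C₁) (h2 : IsCompOf G {u, v, w} C₂)
    (hne : C₁ ≠ C₂) :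
    {S : Set ↥(C₁ ∪ {u, v, w}) | IsThreeCut (edgeClosedGraph G u v w C₁) S}.ncard +
      {S : Set ↥(C₂ ∪ {u, v, w}) | IsThreeCut (edgeClosedGraph G u v w C₂) S}.ncard ≤
      k - 1 := by
  have hT : ({u, v, w} : Set V).ncard = 3 := hcut.1
  set A := {S : Set ↥(C₁ ∪ {u, v, w}) | IsThreeCut (edgeClosedGraph G u v w C₁) S}
  set B := {S : Set ↥(C₂ ∪ {u, v, w}) | IsThreeCut (edgeClosedGraph G u v w C₂) S}
  have hsub : Set.image Subtype.val '' A ∪ Set.image Subtype.val '' B ⊆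
      {S | IsThreeCut G S} \ {{u, v, w}} := by
    rintro _ (⟨S, hS, rfl⟩ | ⟨S, hS, rfl⟩)
    exacts [h1.isThreeCut_image hT hS, h2.isThreeCut_image hT hS]
  calc A.ncard + B.ncard
      = (Set.image Subtype.val '' A).ncard + (Set.image Subtype.val '' B).ncard := by
        simp only [Set.ncard_image_of_injective _ (Set.image_injective.2 Subtype.val_injective)]
    _ = (Set.image Subtype.val '' A ∪ Set.image Subtype.val '' B).ncard :=
        (Set.ncard_union_eq (h1.disjoint_image_threeCuts hT h2 hne)).symm
    _ ≤ ({S | IsThreeCut G S} \ {{u, v, w}}).ncard := Set.ncard_le_ncard hsub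
    _ = k - 1 := by
        rw [Set.ncard_sdiff_singleton_of_mem (s := {S | IsThreeCut G S}) hcut, hcuts]

/-- If `G` has exactly `k ≥ 1` 3-cuts and `{u,v,w}` is a 3-cut, the two edge closed
components of `G - {u,v,w}` together have at most `k - 1` 3-cuts. -/
theorem stmt7 [Fintype V] (G : SimpleGraph V)
    (hP : IsPlanar G) (h3 : IsKConnected 3 G)
    (k : ℕ) (hk : 1 ≤ k) (hcuts : {S : Set V | IsThreeCut G S}.ncard = k)
    (u v w : V) (hcut : IsThreeCut G {u, v, w})
    (C₁ C₂ : Set V) (h1 : IsCompOf G {u, v, w} C₁) (h2 : IsCompOf G {u, v, w} C₂)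
    (hne : C₁ ≠ C₂) (hcover : C₁ ∪ C₂ = ({u, v, w} : Set V)ᶜ) :
    {S : Set ↥(C₁ ∪ {u, v, w}) | IsThreeCut (edgeClosedGraph G u v w C₁) S}.ncard +
      {S : Set ↥(C₂ ∪ {u, v, w}) | IsThreeCut (edgeClosedGraph G u v w C₂) S}.ncard ≤
      k - 1 :=
  stmt7_general G k hcuts u v w hcut C₁ C₂ h1 h2 hne
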